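/- arXiv:2009.09424 — 2 statements merged into one kernel-verified Lean document; each statement's English description precedes it below -/
import Mathlib

section
/- Let R be a commutative ring, J an ideal of R, and r, r1, r2 ∈ R such that r ∈ J, J + ⟨r1⟩ = ⟨r⟩, and J + ⟨r2⟩ = ⟨r⟩. Then in the polynomial ring R[T], the ideal generated by the image of J together with the element r1*(1 - T) + r2*T equals the ideal generated by the constant polynomial r. -/
open Polynomial

theorem Ideal.linear_homotopy_mem_map_C {R : Type*} [CommRing R] {I : Ideal R} {a b : R}
    (ha : a ∈ I) (hb : b ∈ I) : C a * (1 - X) + C b * X ∈ I.map (C : R →+* R[X]) :=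
  add_mem (mul_mem_right _ _ (mem_map_of_mem C ha)) (mul_mem_right _ _ (mem_map_of_mem C hb))

theorem Ideal.map_C_span_singleton {R : Type*} [CommRing R] (r : R) :
    (span {r}).map (C : R →+* R[X]) = span {C r} := by
  rw [map_span, Set.image_singleton]

theorem stmt_3 {R : Type*} [CommRing R] (J : Ideal R) (r r1 r2 : R)
    (hr : r ∈ J)
    (h1 : J ⊔ Ideal.span {r1} = Ideal.span {r})
    (h2 : J ⊔ Ideal.span {r2} = Ideal.span {r}) :
    J.map (C : R →+* R[X]) ⊔ Ideal.span {C r1 * (1 - X) + C r2 * X}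
      = Ideal.span {(C r : R[X])} := by
  have hJ : J ≤ Ideal.span {r} := h1 ▸ le_sup_left
  have hr1 : r1 ∈ Ideal.span {r} := h1 ▸ Ideal.mem_sup_right (Ideal.mem_span_singleton_self r1)
  have hr2 : r2 ∈ Ideal.span {r} := h2 ▸ Ideal.mem_sup_right (Ideal.mem_span_singleton_self r2)
  rw [← Ideal.map_C_span_singleton]
  refine le_antisymm (sup_le (Ideal.map_mono hJ) ?_) (Ideal.map_le_of_le_comap ?_)
  · exact (Ideal.span_singleton_le_iff_mem _).mpr (Ideal.linear_homotopy_mem_map_C hr1 hr2)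
  · exact (Ideal.span_singleton_le_iff_mem _).mpr
      (Ideal.mem_comap.mpr (Ideal.mem_sup_left (Ideal.mem_map_of_mem C hr)))
end

section
/- Let R be a commutative ring, J an ideal of R, and r, δ ∈ R such that δ lies in the radical of the ideal ⟨r⟩ + (J : ⟨r⟩). Then in the polynomial ring R[S], the ideal generated by the image of (J : ⟨r⟩), the constant polynomial r, and the polynomial 1 + δ*S is the unit ideal. -/
/-! The ideal contains `C δ` up to radical, hence `C δ * X`; an ideal containing `1 + y` with
`y` in its radical has `1` in its radical, so it is the unit ideal. -/

open Polynomial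

theorem Ideal.eq_top_of_one_add_mem_of_mem_radical {R : Type*} [CommRing R] {I : Ideal R}
    {y : R} (hy : y ∈ I.radical) (h : 1 + y ∈ I) : I = ⊤ := by
  rw [← Ideal.radical_eq_top, Ideal.eq_top_iff_one]
  simpa using sub_mem (Ideal.le_radical h) hy

theorem stmt_5 {R : Type*} [CommRing R] (J : Ideal R) (r δ : R)
    (hδ : δ ∈ (Ideal.span {r} ⊔ J.colon (Ideal.span {r})).radical) :
    (J.colon (Ideal.span {r})).map (C : R →+* R[X]) ⊔
      Ideal.span {(C r : R[X]), 1 + C δ * X} = ⊤ := by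
  set I := (J.colon (Ideal.span {r})).map (C : R →+* R[X]) ⊔
      Ideal.span {(C r : R[X]), 1 + C δ * X}
  have hmap : (Ideal.span {r} ⊔ J.colon (Ideal.span {r})).map (C : R →+* R[X]) ≤ I := by
    rw [Ideal.map_sup, Ideal.map_span, Set.image_singleton, sup_comm]
    refine sup_le_sup_left (Ideal.span_mono ?_) _
    simp
  have hCδ : C δ ∈ I.radical :=
    Ideal.radical_mono hmap (Ideal.map_radical_le C (Ideal.mem_map_of_mem C hδ))
  refine Ideal.eq_top_of_one_add_mem_of_mem_radical (Ideal.mul_mem_right X _ hCδ) ?_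
  exact Ideal.mem_sup_right (Ideal.subset_span (by simp))
end
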